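/- arXiv:1812.10039 — 2 statements merged into one kernel-verified Lean document; each statement's English description precedes it below -/
import Mathlib

section
/- Let n21, n22 be non-negative integers and n1 a positive integer. The finite sequence of positive integers consisting of the 2*n21 numbers 1, 4, 7, 10, ..., 6*n21-5, 6*n21-2, the number 6*n21+1, the 2*n22 numbers 6*n21+5, 6*n21+8, 6*n21+11, 6*n21+14, ..., 6*n21+6*n22-1, 6*n21+6*n22+2, and the n1-1 numbers 6*n21+6*n22+5, 6*n21+6*n22+9, ..., 6*n21+6*n22+4*n1-3 is strictly increasing, has exactly 2*n21 + 2*n22 + n1 terms, its terms are pairwise at least 3 apart with any two terms divisible by 3 differing by at least 6, and the sum of its terms equals 6*n21^2 - n21 + 6*n22^2 + n22 + 2*n1^2 - n1 + 12*n21*n22 + 6*(n21 + n22)*n1. -/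
/-- Two parts `a` and `b` are compatible with Schur's condition:
they are at least 3 apart, and if both are divisible by 3 they are at least 6 apart. -/
def SchurRel (a b : ℕ) : Prop :=
  (3 ≤ a - b ∨ 3 ≤ b - a) ∧ (3 ∣ a → 3 ∣ b → (6 ≤ a - b ∨ 6 ≤ b - a))

lemma pw_range {n : ℕ} {R : ℕ → ℕ → Prop} (h : ∀ i j, i < j → j < n → R i j) :
    (List.range n).Pairwise R :=
  (List.pairwise_lt_range : (List.range n).Pairwise (· < ·)).imp_of_mem (by
    simp only [List.mem_range]; intro a b ha hb hab; exact h a b hab hb)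

lemma sum_ap (a d n : ℕ) :
    2 * (((List.range n).map (fun k => a + d * k)).sum) + d * n
      = 2 * a * n + d * (n * n) := by
  induction n with
  | zero => simp
  | succ m ih =>
    rw [List.range_succ, List.map_append, List.sum_append]
    simp only [List.map_cons, List.map_nil, List.sum_cons, List.sum_nil]
    have h2 : 2 * ((((List.range m).map (fun k => a + d * k)).sum) + (a + d * m + 0))
          + d * (m + 1)
        = (2 * (((List.range m).map (fun k => a + d * k)).sum) + d * m)
          + (2 * a + 2 * d * m + d) := by
      ring
    rw [h2, ih]
    ring

/-- The base partition `β`: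
the `2 n21` numbers `1, 4, 7, 10, …, 6 n21 - 5, 6 n21 - 2`, the number `6 n21 + 1`,
the `2 n22` numbers `6 n21 + 5, 6 n21 + 8, …, 6 n21 + 6 n22 - 1, 6 n21 + 6 n22 + 2`,
and the `n1 - 1` numbers `6 n21 + 6 n22 + 5, 6 n21 + 6 n22 + 9, …, 6 n21 + 6 n22 + 4 n1 - 3`
is a sequence of positive integers, strictly increasing, of length `2 n21 + 2 n22 + n1`,
whose terms are pairwise at least 3 apart with any two terms divisible by 3 at least 6
apart, and whose sum is
`6 n21² - n21 + 6 n22² + n22 + 2 n1² - n1 + 12 n21 n22 + 6 (n21 + n22) n1`. -/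
theorem base_partition_main (n21 n22 n1 : ℕ) (hn1 : 0 < n1) :
    let L : List ℕ :=
      (List.range (2 * n21)).map (fun k => 3 * k + 1)
        ++ [6 * n21 + 1]
        ++ (List.range (2 * n22)).map (fun k => (6 * n21 + 5) + 3 * k)
        ++ (List.range (n1 - 1)).map (fun k => (6 * n21 + 6 * n22 + 5) + 4 * k)
    (∀ x ∈ L, 0 < x) ∧
      List.Pairwise (· < ·) L ∧
      L.length = 2 * n21 + 2 * n22 + n1 ∧
      List.Pairwise SchurRel L ∧
      L.sum = (6 * n21 ^ 2 - n21) + (6 * n22 ^ 2 + n22) + (2 * n1 ^ 2 - n1)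
        + 12 * n21 * n22 + 6 * (n21 + n22) * n1 := by
  intro L
  have hpw : L.Pairwise (fun x y => x < y ∧ SchurRel x y) := by
    simp only [L, List.pairwise_append, List.pairwise_map, List.pairwise_cons,
      List.mem_append, List.mem_map, List.mem_range,
      List.mem_singleton, List.not_mem_nil, List.mem_cons]
    refine ⟨⟨⟨?_, ⟨fun _ h => h.elim, List.Pairwise.nil⟩, ?_⟩, ?_, ?_⟩, ?_, ?_⟩
    · exact pw_range fun i j hij hj => by simp only [SchurRel]; omega
    · rintro a ⟨k, hk, rfl⟩ b (rfl | h)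
      · simp only [SchurRel]; omega
      · exact h.elim
    · exact pw_range fun i j hij hj => by simp only [SchurRel]; omega
    · rintro a (⟨k, hk, rfl⟩ | rfl | h) b ⟨j, hj, rfl⟩
      · simp only [SchurRel]; omega
      · simp only [SchurRel]; omega
      · exact h.elim
    · exact pw_range fun i j hij hj => by simp only [SchurRel]; omega
    · rintro a ((⟨k, hk, rfl⟩ | rfl | h) | ⟨k, hk, rfl⟩) b ⟨j, hj, rfl⟩
      · simp only [SchurRel]; omega
      · simp only [SchurRel]; omega
      · exact h.elim
      · simp only [SchurRel]; omega
  refine ⟨?_, hpw.imp fun h => h.1, ?_, hpw.imp fun h => h.2, ?_⟩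
  · intro x hx
    simp only [L, List.mem_append, List.mem_map, List.mem_range, List.mem_singleton] at hx
    rcases hx with ((⟨k, hk, rfl⟩ | rfl) | ⟨k, hk, rfl⟩) | ⟨k, hk, rfl⟩ <;> omega
  · simp only [L, List.length_append, List.length_map, List.length_range,
      List.length_singleton]
    omega
  · obtain ⟨m, rfl⟩ : ∃ m, n1 = m + 1 := ⟨n1 - 1, by omega⟩
    have hA := sum_ap 1 3 (2 * n21)
    have hC := sum_ap (6 * n21 + 5) 3 (2 * n22)
    have hD := sum_ap (6 * n21 + 6 * n22 + 5) 4 m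
    have e : List.map (fun k => 3 * k + 1) (List.range (2 * n21))
        = List.map (fun k : ℕ => 1 + 3 * k) (List.range (2 * n21)) := by
      simp [Nat.add_comm]
    have key : 2 * L.sum =
        2 * (((List.range (2 * n21)).map (fun k => 1 + 3 * k)).sum)
        + 2 * (6 * n21 + 1)
        + 2 * (((List.range (2 * n22)).map (fun k => (6 * n21 + 5) + 3 * k)).sum)
        + 2 * (((List.range m).map (fun k => (6 * n21 + 6 * n22 + 5) + 4 * k)).sum) := by
      simp only [L, List.sum_append, List.sum_cons, List.sum_nil, Nat.add_sub_cancel]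
      rw [e]
      ring
    
    have h1 : n21 ≤ 6 * n21 ^ 2 := by nlinarith
    have h2 : m + 1 ≤ 2 * (m + 1) ^ 2 := by nlinarith
    zify [h1, h2] at key hA hC hD ⊢
    nlinarith [key, hA, hC, hD]
end

section
/- Let n11, n12, n10 be non-negative integers. The finite sequence of positive integers consisting of the n11 numbers 1, 7, ..., 6*n11-5, the n12 numbers 6*n11+2, 6*n11+8, ..., 6*n11+6*n12-4, and the n10 numbers 6*n11+6*n12+3, 6*n11+6*n12+9, ..., 6*n11+6*n12+6*n10-3 is strictly increasing, satisfies Schur's condition, has exactly n11 terms congruent to 1 mod 3, exactly n12 terms congruent to 2 mod 3, and exactly n10 terms divisible by 3, and the sum of its terms equals 3*n11^2 - 2*n11 + 3*n12^2 - n12 + 3*n10^2 + 6*n11*n12 + 6*n11*n10 + 6*n12*n10. -/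
private lemma sumAP (n a : ℕ) :
    ((List.range n).map (fun k => a + 6*k)).sum + 3*n = n*a + 3*n^2 := by
  induction n with
  | zero => simp
  | succ n ih =>
    rw [List.range_succ]
    simp only [List.map_append, List.sum_append, List.map_cons, List.sum_cons, List.map_nil,
      List.sum_nil]
    ring_nf
    ring_nf at ih
    nlinarith [ih]

private lemma pairwiseMapAP (n : ℕ) (f : ℕ → ℕ) (P : ℕ → ℕ → Prop)
    (h : ∀ i j, i < j → j < n → P (f i) (f j)) :
    List.Pairwise P ((List.range n).map f) := by
  rw [List.pairwise_map]
  exact (List.pairwise_lt_range (n := n)).imp_of_mem (fun hi hj hij => h _ _ hij (List.mem_range.mp hj))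

private lemma filterAll (n a : ℕ) (p : ℕ → Bool) (h : ∀ k < n, p (a + 6*k)) :
    (((List.range n).map (fun k => a + 6*k)).filter p).length = n := by
  rw [List.filter_eq_self.mpr]
  · simp
  · simp only [List.mem_map, List.mem_range]
    rintro x ⟨k, hk, rfl⟩
    exact h k hk

private lemma filterNone (n a : ℕ) (p : ℕ → Bool) (h : ∀ k < n, ¬ p (a + 6*k)) :
    (((List.range n).map (fun k => a + 6*k)).filter p).length = 0 := by
  rw [List.filter_eq_nil_iff.mpr]
  · simp
  · simp only [List.mem_map, List.mem_range]
    rintro x ⟨k, hk, rfl⟩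
    exact h k hk

/-- The base partition primitive for the mod 3 refinement:
the `n11` numbers `1, 7, …, 6 n11 - 5`, the `n12` numbers
`6 n11 + 2, 6 n11 + 8, …, 6 n11 + 6 n12 - 4`, and the `n10` numbers
`6 n11 + 6 n12 + 3, 6 n11 + 6 n12 + 9, …, 6 n11 + 6 n12 + 6 n10 - 3`
form a strictly increasing sequence of positive integers satisfying Schur's condition,
with exactly `n11` terms `≡ 1 (mod 3)`, `n12` terms `≡ 2 (mod 3)` and `n10` terms
divisible by 3, and sum
`3 n11² - 2 n11 + 3 n12² - n12 + 3 n10² + 6 n11 n12 + 6 n11 n10 + 6 n12 n10`. -/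
theorem base_partition_primitive_mod3 (n11 n12 n10 : ℕ) :
    let L : List ℕ :=
      (List.range n11).map (fun k => 1 + 6 * k)
        ++ (List.range n12).map (fun k => (6 * n11 + 2) + 6 * k)
        ++ (List.range n10).map (fun k => (6 * n11 + 6 * n12 + 3) + 6 * k)
    (∀ x ∈ L, 0 < x) ∧
      List.Pairwise (· < ·) L ∧
      List.Pairwise SchurRel L ∧
      (L.filter fun x => x % 3 = 1).length = n11 ∧
      (L.filter fun x => x % 3 = 2).length = n12 ∧
      (L.filter fun x => x % 3 = 0).length = n10 ∧
      L.sum = (3 * n11 ^ 2 - 2 * n11) + (3 * n12 ^ 2 - n12) + 3 * n10 ^ 2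
        + 6 * n11 * n12 + 6 * n11 * n10 + 6 * n12 * n10 := by
  intro L
  have hP : L.Pairwise (fun a b => a + 3 ≤ b ∧ (3 ∣ a → 3 ∣ b → a + 6 ≤ b)) := by
    simp only [L, List.pairwise_append, List.mem_append, List.mem_map, List.mem_range]
    refine ⟨⟨?_, ?_, ?_⟩, ?_, ?_⟩
    · exact pairwiseMapAP _ _ _ (fun i j hij hj => by constructor <;> omega)
    · exact pairwiseMapAP _ _ _ (fun i j hij hj => by constructor <;> omega)
    · rintro x ⟨j, hj, rfl⟩ y ⟨k, hk, rfl⟩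
      constructor <;> omega
    · exact pairwiseMapAP _ _ _ (fun i j hij hj => by constructor <;> omega)
    · rintro x (⟨j, hj, rfl⟩ | ⟨j, hj, rfl⟩) y ⟨k, hk, rfl⟩ <;> constructor <;> omega
  refine ⟨?_, ?_, ?_, ?_, ?_, ?_, ?_⟩
  · simp only [L, List.mem_append, List.mem_map, List.mem_range]
    rintro x (⟨k, hk, rfl⟩ | ⟨k, hk, rfl⟩ | ⟨k, hk, rfl⟩) <;> omega
  · exact hP.imp (fun h => by omega)
  · exact hP.imp (fun h => ⟨Or.inr (by omega), fun _ _ => Or.inr (by omega)⟩)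
  · simp only [L, List.filter_append, List.length_append]
    rw [filterAll _ _ _ (fun k hk => by simp; omega),
      filterNone _ _ _ (fun k hk => by simp; omega),
      filterNone _ _ _ (fun k hk => by simp; omega)]
    omega
  · simp only [L, List.filter_append, List.length_append]
    rw [filterNone _ _ _ (fun k hk => by simp; omega),
      filterAll _ _ _ (fun k hk => by simp; omega),
      filterNone _ _ _ (fun k hk => by simp; omega)]
    omega
  · simp only [L, List.filter_append, List.length_append]
    rw [filterNone _ _ _ (fun k hk => by simp; omega),
      filterNone _ _ _ (fun k hk => by simp; omega),
      filterAll _ _ _ (fun k hk => by simp; omega)]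
    omega
  · simp only [L, List.sum_append]
    have h1 := sumAP n11 1
    have h2 := sumAP n12 (6 * n11 + 2)
    have h3 := sumAP n10 (6 * n11 + 6 * n12 + 3)
    have q1 : n11 ≤ n11 ^ 2 := Nat.le_self_pow (by norm_num) _
    have q2 : n12 ≤ n12 ^ 2 := Nat.le_self_pow (by norm_num) _
    have e2 : n12 * (6 * n11 + 2) = 6 * (n11 * n12) + 2 * n12 := by ring
    have e3 : n10 * (6 * n11 + 6 * n12 + 3) = 6 * (n11 * n10) + 6 * (n12 * n10) + 3 * n10 := by
      ring
    have g1 : 6 * n11 * n12 = 6 * (n11 * n12) := by ring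
    have g2 : 6 * n11 * n10 = 6 * (n11 * n10) := by ring
    have g3 : 6 * n12 * n10 = 6 * (n12 * n10) := by ring
    rw [e2] at h2
    rw [e3] at h3
    rw [g1, g2, g3]
    generalize n11 ^ 2 = A at h1 q1 ⊢
    generalize n12 ^ 2 = B at h2 q2 ⊢
    generalize n10 ^ 2 = C at h3 ⊢
    generalize n11 * n12 = P at h2 ⊢
    generalize n11 * n10 = Q at h3 ⊢
    generalize n12 * n10 = R at h3 ⊢
    omega
end
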